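/- Let 𝔻 = {z ∈ ℂ : |z| < 1} and let f : ℂ → ℂ be complex differentiable (holomorphic) on 𝔻. Then there exists a constant C ≥ 0 with (1 − |z|²)·|f′(z)| ≤ C for all z ∈ 𝔻 if and only if there exists a constant C′ ≥ 0 with √(1 − |z|²) · √(1 − |w|²) · |f(z) − f(w)| ≤ C′ · |z − w| for all z, w ∈ 𝔻. -/

import Mathlib

open Filter Topology Set

-- helper 1: 2 log u ≤ u - u⁻¹ for u ≥ 1
lemma two_log_le (u : ℝ) (hu : 1 ≤ u) : 2 * Real.log u ≤ u - u⁻¹ := by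
  set φ : ℝ → ℝ := fun x => x - x⁻¹ - 2 * Real.log x with hφdef
  have hder : ∀ x ∈ Set.Ioi (1:ℝ), HasDerivAt φ (1 + (x^2)⁻¹ - 2 * x⁻¹) x := by
    intro x hx
    have hx1 : (1:ℝ) < x := hx
    have hx0 : x ≠ 0 := by linarith
    have h1 := ((hasDerivAt_id x).sub (hasDerivAt_inv hx0)).sub
      ((Real.hasDerivAt_log hx0).const_mul 2)
    exact h1.congr_deriv (by ring)
  have hmono : MonotoneOn φ (Set.Ici (1:ℝ)) := by
    apply monotoneOn_of_deriv_nonneg (convex_Ici 1)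
    · apply ContinuousOn.sub (ContinuousOn.sub continuousOn_id ?_) ?_
      · exact continuousOn_inv₀.mono (fun x hx => by
          simp only [Set.mem_compl_iff, Set.mem_singleton_iff]
          intro h; rw [h] at hx; simp at hx; linarith)
      · exact (continuousOn_const.mul (Real.continuousOn_log.mono (fun x hx => by
          simp only [Set.mem_compl_iff, Set.mem_singleton_iff]
          intro h; rw [h] at hx; simp at hx; linarith)))
    · intro x hx
      rw [interior_Ici] at hx
      exact (hder x hx).differentiableAt.differentiableWithinAt
    · intro x hx
      rw [interior_Ici] at hx
      rw [(hder x hx).deriv]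
      have hx0 : x ≠ 0 := by
        have := hx; simp only [Set.mem_Ioi] at this; positivity
      have : 1 + (x^2)⁻¹ - 2 * x⁻¹ = (1 - x⁻¹)^2 := by field_simp; ring
      rw [this]; positivity
  have := hmono (Set.mem_Ici.mpr le_rfl) (Set.mem_Ici.mpr hu) hu
  simp only [hφdef, Real.log_one] at this
  simp only [inv_one] at this
  linarith

-- helper 2
lemma log_diff_le (a b : ℝ) (ha : 0 < a) (hab : a ≤ b) :
    Real.log b - Real.log a ≤ (b - a) / (Real.sqrt a * Real.sqrt b) := by
  have hb : 0 < b := lt_of_lt_of_le ha hab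
  set u : ℝ := Real.sqrt b / Real.sqrt a with hu
  have hsa : 0 < Real.sqrt a := Real.sqrt_pos.mpr ha
  have hsb : 0 < Real.sqrt b := Real.sqrt_pos.mpr hb
  have hu1 : 1 ≤ u := by
    rw [hu, le_div_iff₀ hsa, one_mul]
    exact Real.sqrt_le_sqrt hab
  have h2 := two_log_le u hu1
  have hlog : 2 * Real.log u = Real.log b - Real.log a := by
    rw [hu, Real.log_div (ne_of_gt hsb) (ne_of_gt hsa), Real.log_sqrt hb.le,
      Real.log_sqrt ha.le]
    ring
  have huu : u - u⁻¹ = (b - a) / (Real.sqrt a * Real.sqrt b) := by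
    rw [hu]
    rw [inv_div]
    field_simp
    rw [Real.sq_sqrt hb.le, Real.sq_sqrt ha.le]
  rw [← hlog, ← huu]; exact h2

lemma log_ratio (K a b : ℝ) (hK : 0 ≤ K) (ha : 0 < a) (hb : 0 < b) (hab : b ≠ a) :
    K / (b - a) * (Real.log b - Real.log a) ≤ K / (Real.sqrt a * Real.sqrt b) := by
  have hsa : 0 < Real.sqrt a := Real.sqrt_pos.mpr ha
  have hsb : 0 < Real.sqrt b := Real.sqrt_pos.mpr hb
  rcases lt_or_gt_of_ne hab with h | h
  · -- b < a
    have hlog := log_diff_le b a hb h.le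
    have hne : a - b ≠ 0 := by intro h'; apply hab; linarith
    have h1 : K / (b - a) * (Real.log b - Real.log a)
        = K / (a - b) * (Real.log a - Real.log b) := by
      rw [div_mul_eq_mul_div, div_mul_eq_mul_div,
        div_eq_div_iff (sub_ne_zero.mpr hab) hne]
      ring
    rw [h1]
    calc K / (a - b) * (Real.log a - Real.log b)
        ≤ K / (a - b) * ((a - b) / (Real.sqrt b * Real.sqrt a)) :=
          mul_le_mul_of_nonneg_left hlog (div_nonneg hK (by linarith))
      _ = K / (Real.sqrt a * Real.sqrt b) := by
          rw [mul_comm (Real.sqrt b)]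
          field_simp
  · -- a < b
    have hlog := log_diff_le a b ha h.le
    have hne : b - a ≠ 0 := by intro h'; apply hab; linarith
    calc K / (b - a) * (Real.log b - Real.log a)
        ≤ K / (b - a) * ((b - a) / (Real.sqrt a * Real.sqrt b)) :=
          mul_le_mul_of_nonneg_left hlog (div_nonneg hK (by linarith))
      _ = K / (Real.sqrt a * Real.sqrt b) := by field_simp

lemma seg_bound (f : ℂ → ℂ) (hf : DifferentiableOn ℂ f (Metric.ball (0 : ℂ) 1))
    (C : ℝ) (hC0 : 0 ≤ C)
    (hC : ∀ z ∈ Metric.ball (0 : ℂ) 1, (1 - ‖z‖ ^ 2) * ‖deriv f z‖ ≤ C)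
    (z : ℂ) (hz : z ∈ Metric.ball (0 : ℂ) 1)
    (w : ℂ) (hw : w ∈ Metric.ball (0 : ℂ) 1) :
    ‖f z - f w‖ ≤ C * ‖z - w‖ / (Real.sqrt (1 - ‖w‖) * Real.sqrt (1 - ‖z‖)) := by
  have hzn : ‖z‖ < 1 := by simpa using hz
  have hwn : ‖w‖ < 1 := by simpa using hw
  set a : ℝ := 1 - ‖w‖ with ha_def
  set b : ℝ := 1 - ‖z‖ with hb_def
  have ha : 0 < a := by rw [ha_def]; linarith
  have hb : 0 < b := by rw [hb_def]; linarith
  set d : ℝ := b - a with hd_def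
  set ζ : ℝ → ℂ := fun t => w + t • (z - w) with hζ_def
  have hℓpos : ∀ t : ℝ, t ∈ Icc (0:ℝ) 1 → 0 < a + t * d := by
    intro t ht
    obtain ⟨ht0, ht1⟩ := ht
    rcases le_total a b with h | h
    · nlinarith [mul_nonneg ht0 (by rw [hd_def]; linarith : (0:ℝ) ≤ d)]
    · nlinarith [mul_nonneg (by linarith : (0:ℝ) ≤ 1 - t)
        (by rw [hd_def]; linarith : (0:ℝ) ≤ -d), hd_def]
  have hζnorm : ∀ t : ℝ, t ∈ Icc (0:ℝ) 1 → ‖ζ t‖ ≤ 1 - (a + t * d) := by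
    intro t ht
    obtain ⟨ht0, ht1⟩ := ht
    have hζeq : ζ t = (1 - t) • w + t • z := by
      simp only [hζ_def]
      push_cast
      module
    rw [hζeq]
    have h1 : ‖(1 - t) • w + t • z‖ ≤ (1 - t) * ‖w‖ + t * ‖z‖ := by
      refine (norm_add_le _ _).trans ?_
      rw [norm_smul, norm_smul, Real.norm_eq_abs, Real.norm_eq_abs,
        abs_of_nonneg (by linarith), abs_of_nonneg ht0]
    refine h1.trans ?_
    simp only [ha_def, hb_def, hd_def]
    ring_nf
    nlinarith
  have hζball : ∀ t : ℝ, t ∈ Icc (0:ℝ) 1 → ζ t ∈ Metric.ball (0 : ℂ) 1 := by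
    intro t ht
    have h1 := hζnorm t ht
    have h2 := hℓpos t ht
    simp only [Metric.mem_ball, dist_zero_right]
    linarith
  have hg' : ∀ t : ℝ, t ∈ Icc (0:ℝ) 1 →
      HasDerivAt (fun s => f (ζ s)) ((z - w) • deriv f (ζ t)) t := by
    intro t ht
    have hfd : HasDerivAt f (deriv f (ζ t)) (ζ t) :=
      (hf.differentiableAt (Metric.isOpen_ball.mem_nhds (hζball t ht))).hasDerivAt
    have hζd : HasDerivAt ζ (z - w) t := by
      simpa [hζ_def] using ((hasDerivAt_id t).smul_const (z - w)).const_add w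
    have hcomp := (hfd.hasFDerivAt.restrictScalars ℝ).comp_hasDerivAt t hζd
    simpa [smul_eq_mul, mul_comm, Function.comp_def] using hcomp
  set K : ℝ := C * ‖z - w‖ with hK_def
  have hK0 : 0 ≤ K := mul_nonneg hC0 (norm_nonneg _)
  have hbound : ∀ t : ℝ, t ∈ Icc (0:ℝ) 1 →
      ‖(z - w) • deriv f (ζ t)‖ ≤ K / (a + t * d) := by
    intro t ht
    have hball := hζball t ht
    have hpos := hℓpos t ht
    have hle : a + t * d ≤ 1 - ‖ζ t‖ ^ 2 := by
      have h1 := hζnorm t ht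
      have h2 : (0:ℝ) ≤ ‖ζ t‖ := norm_nonneg _
      nlinarith
    have h3 := hC (ζ t) hball
    have h4 : ‖deriv f (ζ t)‖ ≤ C / (a + t * d) := by
      rw [le_div_iff₀ hpos]
      calc ‖deriv f (ζ t)‖ * (a + t * d) ≤ ‖deriv f (ζ t)‖ * (1 - ‖ζ t‖ ^ 2) :=
            mul_le_mul_of_nonneg_left hle (norm_nonneg _)
        _ ≤ C := by rw [mul_comm]; exact h3
    rw [norm_smul]
    calc ‖z - w‖ * ‖deriv f (ζ t)‖ ≤ ‖z - w‖ * (C / (a + t * d)) :=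
          mul_le_mul_of_nonneg_left h4 (norm_nonneg _)
      _ = K / (a + t * d) := by rw [hK_def]; ring
  have main : ‖f z - f w‖ ≤ K / (Real.sqrt a * Real.sqrt b) := by
    by_cases hd0 : d = 0
    · set B : ℝ → ℝ := fun t => (K / a) * t with hB_def
      have hB : ∀ x : ℝ, HasDerivAt B (K / a) x := fun x => by
        simpa using (hasDerivAt_id x).const_mul (K / a)
      have key := image_norm_le_of_norm_deriv_right_le_deriv_boundary
        (f := fun t => f (ζ t) - f (ζ 0)) (a := 0) (b := 1)
        (f' := fun t => (z - w) • deriv f (ζ t)) ?_ ?_ (B := B) (B' := fun _ => K / a) ?_ hB ?_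
        (right_mem_Icc.mpr zero_le_one)
      · have hζ1 : ζ 1 = z := by simp [hζ_def]
        have hζ0 : ζ 0 = w := by simp [hζ_def]
        have key2 : ‖f z - f w‖ ≤ K / a := by simpa [hζ1, hζ0, hB_def] using key
        refine key2.trans (le_of_eq ?_)
        have hab : b = a := by rw [hd_def] at hd0; linarith
        rw [hab, Real.mul_self_sqrt ha.le]
      · exact fun t ht => ((hg' t ht).sub_const _).continuousAt.continuousWithinAt
      · exact fun t ht => ((hg' t (Ico_subset_Icc_self ht)).sub_const _).hasDerivWithinAt
      · simp [hB_def]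
      · intro t ht
        have h5 := hbound t (Ico_subset_Icc_self ht)
        simpa [hd0] using h5
    · set B : ℝ → ℝ := fun t => (K / d) * (Real.log (a + t * d) - Real.log a) with hB_def
      have hBd : ∀ t : ℝ, t ∈ Icc (0:ℝ) 1 → HasDerivAt B (K / (a + t * d)) t := by
        intro t ht
        have hpos := hℓpos t ht
        have h1 : HasDerivAt (fun s : ℝ => a + s * d) d t := by
          simpa using ((hasDerivAt_id t).mul_const d).const_add a
        have h2 : HasDerivAt (fun s : ℝ => Real.log (a + s * d)) (d / (a + t * d)) t := by
          have h2' := (Real.hasDerivAt_log (ne_of_gt hpos)).comp t h1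
          simpa [div_eq_inv_mul, Function.comp_def] using h2'
        have h3 := (h2.sub_const (Real.log a)).const_mul (K / d)
        exact h3.congr_deriv (by field_simp)
      have key := image_norm_le_of_norm_deriv_right_le_deriv_boundary'
        (f := fun t => f (ζ t) - f (ζ 0)) (a := 0) (b := 1)
        (f' := fun t => (z - w) • deriv f (ζ t)) ?_ ?_
        (B := B) (B' := fun t => K / (a + t * d)) ?_ ?_ ?_ ?_
        (right_mem_Icc.mpr zero_le_one)
      · have hζ1 : ζ 1 = z := by simp [hζ_def]
        have hζ0 : ζ 0 = w := by simp [hζ_def]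
        have hB1 : B 1 = (K / d) * (Real.log b - Real.log a) := by
          simp only [hB_def, one_mul]
          rw [hd_def]
          ring_nf
        have key2 : ‖f z - f w‖ ≤ (K / d) * (Real.log b - Real.log a) := by
          rw [← hB1]
          simpa [hζ1, hζ0] using key
        refine key2.trans ?_
        rw [hd_def]
        exact log_ratio K a b hK0 ha hb (fun h => hd0 (by rw [hd_def, h, sub_self]))
      · exact fun t ht => ((hg' t ht).sub_const _).continuousAt.continuousWithinAt
      · exact fun t ht => ((hg' t (Ico_subset_Icc_self ht)).sub_const _).hasDerivWithinAt
      · simp [hB_def]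
      · exact fun t ht => (hBd t ht).continuousAt.continuousWithinAt
      · exact fun t ht => (hBd t (Ico_subset_Icc_self ht)).hasDerivWithinAt
      · exact fun t ht => hbound t (Ico_subset_Icc_self ht)
  exact main


/-- Holland–Walsh characterization of Bloch functions on the unit disc. -/
theorem bloch_iff_holland_walsh
    (f : ℂ → ℂ) (hf : DifferentiableOn ℂ f (Metric.ball (0 : ℂ) 1)) :
    (∃ C : ℝ, 0 ≤ C ∧ ∀ z ∈ Metric.ball (0 : ℂ) 1,
        (1 - ‖z‖ ^ 2) * ‖deriv f z‖ ≤ C)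
      ↔ (∃ C' : ℝ, 0 ≤ C' ∧ ∀ z ∈ Metric.ball (0 : ℂ) 1,
          ∀ w ∈ Metric.ball (0 : ℂ) 1,
            Real.sqrt (1 - ‖z‖ ^ 2) * Real.sqrt (1 - ‖w‖ ^ 2) * ‖f z - f w‖
              ≤ C' * ‖z - w‖) := by
  constructor
  · rintro ⟨C, hC0, hC⟩
    refine ⟨2 * C, by linarith, ?_⟩
    intro z hz w hw
    have hzn : ‖z‖ < 1 := by simpa using hz
    have hwn : ‖w‖ < 1 := by simpa using hw
    have ha : (0:ℝ) < 1 - ‖w‖ := by linarith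
    have hb : (0:ℝ) < 1 - ‖z‖ := by linarith
    have hsa : 0 < Real.sqrt (1 - ‖w‖) := Real.sqrt_pos.mpr ha
    have hsb : 0 < Real.sqrt (1 - ‖z‖) := Real.sqrt_pos.mpr hb
    have h3 := seg_bound f hf C hC0 hC z hz w hw
    have h1 : Real.sqrt (1 - ‖z‖ ^ 2) ≤ Real.sqrt 2 * Real.sqrt (1 - ‖z‖) := by
      rw [← Real.sqrt_mul (by norm_num) _]
      apply Real.sqrt_le_sqrt
      nlinarith [norm_nonneg z]
    have h2 : Real.sqrt (1 - ‖w‖ ^ 2) ≤ Real.sqrt 2 * Real.sqrt (1 - ‖w‖) := by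
      rw [← Real.sqrt_mul (by norm_num) _]
      apply Real.sqrt_le_sqrt
      nlinarith [norm_nonneg w]
    calc Real.sqrt (1 - ‖z‖ ^ 2) * Real.sqrt (1 - ‖w‖ ^ 2) * ‖f z - f w‖
        ≤ (Real.sqrt 2 * Real.sqrt (1 - ‖z‖)) * (Real.sqrt 2 * Real.sqrt (1 - ‖w‖))
            * (C * ‖z - w‖ / (Real.sqrt (1 - ‖w‖) * Real.sqrt (1 - ‖z‖))) := by
          gcongr <;> positivity
      _ = (Real.sqrt 2 * Real.sqrt 2) * (C * ‖z - w‖) := by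
          have e1 : Real.sqrt (1 - ‖w‖) * (Real.sqrt (1 - ‖w‖))⁻¹ = 1 :=
            mul_inv_cancel₀ hsa.ne'
          have e2 : Real.sqrt (1 - ‖z‖) * (Real.sqrt (1 - ‖z‖))⁻¹ = 1 :=
            mul_inv_cancel₀ hsb.ne'
          linear_combination (Real.sqrt 2 * Real.sqrt 2 * C * ‖z - w‖ *
              (Real.sqrt (1 - ‖z‖) * (Real.sqrt (1 - ‖z‖))⁻¹)) * e1
            + (Real.sqrt 2 * Real.sqrt 2 * C * ‖z - w‖) * e2
      _ = 2 * C * ‖z - w‖ := by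
          rw [Real.mul_self_sqrt (by norm_num : (0:ℝ) ≤ 2)]
          ring
  · rintro ⟨C', hC0, hC'⟩
    refine ⟨C', hC0, ?_⟩
    intro z hz
    have hzn : ‖z‖ < 1 := by simpa using hz
    have hz2 : (0:ℝ) ≤ 1 - ‖z‖ ^ 2 := by nlinarith [norm_nonneg z]
    have hd : HasDerivAt f (deriv f z) z :=
      (hf.differentiableAt (Metric.isOpen_ball.mem_nhds hz)).hasDerivAt
    have hslope : Tendsto (slope f z) (𝓝[≠] z) (𝓝 (deriv f z)) :=
      hasDerivAt_iff_tendsto_slope.mp hd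
    have hc : Continuous fun w : ℂ => Real.sqrt (1 - ‖w‖ ^ 2) :=
      (continuous_const.sub ((continuous_norm).pow 2)).sqrt
    have htend : Tendsto
        (fun w => Real.sqrt (1 - ‖z‖ ^ 2) * Real.sqrt (1 - ‖w‖ ^ 2) * ‖slope f z w‖)
        (𝓝[≠] z)
        (𝓝 (Real.sqrt (1 - ‖z‖ ^ 2) * Real.sqrt (1 - ‖z‖ ^ 2) * ‖deriv f z‖)) := by
      exact (tendsto_const_nhds.mul ((hc.tendsto z).mono_left nhdsWithin_le_nhds)).mul
        hslope.norm
    have hlim : Real.sqrt (1 - ‖z‖ ^ 2) * Real.sqrt (1 - ‖z‖ ^ 2) * ‖deriv f z‖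
        = (1 - ‖z‖ ^ 2) * ‖deriv f z‖ := by
      rw [Real.mul_self_sqrt hz2]
    rw [← hlim]
    refine le_of_tendsto htend ?_
    have hball : ∀ᶠ w in 𝓝[≠] z, w ∈ Metric.ball (0:ℂ) 1 :=
      eventually_nhdsWithin_of_eventually_nhds
        (eventually_of_mem (Metric.isOpen_ball.mem_nhds hz) fun w hw => hw)
    have hne : ∀ᶠ w in 𝓝[≠] z, w ≠ z := eventually_mem_nhdsWithin
    filter_upwards [hball, hne] with w hw hwz
    have hwz' : (0:ℝ) < ‖w - z‖ := by
      rw [norm_pos_iff]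
      exact sub_ne_zero.mpr hwz
    have hkey := hC' z hz w hw
    have hs : ‖slope f z w‖ = ‖f w - f z‖ * ‖w - z‖⁻¹ := by
      rw [slope_def_field, norm_div, div_eq_mul_inv]
    rw [hs]
    have h1 : ‖f w - f z‖ = ‖f z - f w‖ := norm_sub_rev _ _
    have h2 : ‖w - z‖ = ‖z - w‖ := norm_sub_rev _ _
    calc Real.sqrt (1 - ‖z‖ ^ 2) * Real.sqrt (1 - ‖w‖ ^ 2) * (‖f w - f z‖ * ‖w - z‖⁻¹)
        = (Real.sqrt (1 - ‖z‖ ^ 2) * Real.sqrt (1 - ‖w‖ ^ 2) * ‖f z - f w‖) * ‖w - z‖⁻¹ := by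
          rw [h1]; ring
      _ ≤ (C' * ‖z - w‖) * ‖w - z‖⁻¹ := by
          apply mul_le_mul_of_nonneg_right hkey
          positivity
      _ = C' := by
          rw [← h2]
          exact mul_div_cancel_right₀ C' (ne_of_gt hwz')
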